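/- arXiv:2302.11628 — 8 statements merged into one kernel-verified Lean document; each statement's English description precedes it below -/
import Mathlib

section
/- Let T submodels each vote for a label, let y_pl be the plurality winner (most votes, ties broken toward smaller index) and y_ru the runner-up. If at most r = ⌊(c(y_pl) − c(y_ru) − [y_ru < y_pl]) / 2⌋ submodel votes are changed arbitrarily (each change moves one submodel's vote from its current label to any other label), then the plurality winner (with smallest-index tie-breaking) is still y_pl. -/
/-- Number of submodels voting for label `y`. -/
def countVotes {T : ℕ} (f : Fin T → ℕ) (y : ℕ) : ℕ :=
  (Finset.univ.filter fun t => f t = y).card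

/-- Tie-broken vote gap `Δ(y, y') = c(y) − c(y') − [y' < y]`. -/
def voteGap {T : ℕ} (f : Fin T → ℕ) (y y' : ℕ) : ℤ :=
  (countVotes f y : ℤ) - (countVotes f y' : ℤ) - (if y' < y then 1 else 0)

/-- `y` is preferred over `y'` under plurality with smallest-index tie-breaking. -/
def Preferred {T : ℕ} (f : Fin T → ℕ) (y y' : ℕ) : Prop :=
  countVotes f y > countVotes f y' ∨ (countVotes f y = countVotes f y' ∧ y < y')

/-- `y` is the plurality winner over the label set `Y` (smallest-index tie-breaking). -/
def IsPlurality {T : ℕ} (Y : Finset ℕ) (f : Fin T → ℕ) (y : ℕ) : Prop :=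
  y ∈ Y ∧ ∀ y' ∈ Y, y' ≠ y → Preferred f y y'


lemma count_change {T : ℕ} (f f' : Fin T → ℕ) (y : ℕ) :
    countVotes f y ≤ countVotes f' y + (Finset.univ.filter fun t => f' t ≠ f t).card := by
  unfold countVotes
  calc (Finset.univ.filter fun t => f t = y).card
      ≤ ((Finset.univ.filter fun t => f' t = y) ∪ (Finset.univ.filter fun t => f' t ≠ f t)).card := by
        apply Finset.card_le_card
        intro t ht
        simp only [Finset.mem_filter, Finset.mem_union, Finset.mem_univ, true_and] at *
        by_cases h : f' t = f t
        · exact Or.inl (h.trans ht)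
        · exact Or.inr h
    _ ≤ _ := Finset.card_union_le _ _

lemma count_change' {T : ℕ} (f f' : Fin T → ℕ) (y : ℕ) :
    countVotes f' y ≤ countVotes f y + (Finset.univ.filter fun t => f' t ≠ f t).card := by
  have h := count_change f' f y
  have : (Finset.univ.filter fun t => f t ≠ f' t) = (Finset.univ.filter fun t => f' t ≠ f t) := by
    apply Finset.filter_congr; intro t _; simp [ne_comm]
  rwa [this] at h

/-- **Certified feature robustness with plurality voting.**
If at most `r = ⌊(c(y_pl) − c(y_ru) − [y_ru < y_pl]) / 2⌋` submodel votes change,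
the plurality winner is still `y_pl`. -/
theorem plurality_certified_robustness {T : ℕ} (Y : Finset ℕ) (f : Fin T → ℕ)
    (hf : ∀ t, f t ∈ Y) (ypl yru : ℕ)
    (hpl : IsPlurality Y f ypl)
    (hru : IsPlurality (Y.erase ypl) f yru)
    (f' : Fin T → ℕ) (hf' : ∀ t, f' t ∈ Y)
    (hdiff : ((Finset.univ.filter fun t => f' t ≠ f t).card : ℤ) ≤ voteGap f ypl yru / 2) :
    IsPlurality Y f' ypl := by

  obtain ⟨hyplY, hpref⟩ := hpl
  obtain ⟨hyruE, hrupref⟩ := hru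
  have hyruY := Finset.mem_of_mem_erase hyruE
  have hyrune := Finset.ne_of_mem_erase hyruE
  refine ⟨hyplY, fun y' hy' hne => ?_⟩
  set k : ℤ := ((Finset.univ.filter fun t => f' t ≠ f t).card : ℤ) with hk
  -- gap to yru is nonneg
  have hΔ : voteGap f ypl yru ≥ 0 := by
    have := hpref yru hyruY hyrune
    unfold Preferred at this
    unfold voteGap
    rcases this with h | ⟨h1, h2⟩
    · split <;> omega
    · have : ¬ (yru < ypl) := not_lt.mpr (le_of_lt h2)
      simp [this, h1]
  have h2k : 2 * k ≤ voteGap f ypl yru := by omega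
  -- gap to y' at least gap to yru
  have hgap : voteGap f ypl yru ≤ voteGap f ypl y' := by
    by_cases hcase : y' = yru
    · rw [hcase]
    · have hy'E : y' ∈ Y.erase ypl := Finset.mem_erase.mpr ⟨hne, hy'⟩
      have := hrupref y' hy'E hcase
      unfold Preferred at this
      unfold voteGap
      rcases this with h | ⟨h1, h2⟩
      · rcases Nat.lt_or_ge yru ypl with h3 | h3 <;> rcases Nat.lt_or_ge y' ypl with h4 | h4 <;>
          simp [h3, h4, not_lt.mpr, not_lt_of_ge] <;> omega
      · have : y' < ypl → yru < ypl := fun h => lt_trans h2 h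
        rcases Nat.lt_or_ge y' ypl with h4 | h4
        · simp [h4, this h4, h1]
        · have : ¬ (y' < ypl) := not_lt.mpr h4
          simp [this, h1]
          split <;> omega
  -- count bounds
  have b1 := count_change f f' ypl
  have b2 := count_change' f f' ypl
  have b3 := count_change f f' y'
  have b4 := count_change' f f' y'
  unfold Preferred
  unfold voteGap at hgap h2k
  rcases Nat.lt_trichotomy ypl y' with h | h | h
  · have hnl : ¬ (y' < ypl) := not_lt.mpr (le_of_lt h)
    simp only [hnl, if_false] at hgap
    have : countVotes f' y' ≤ countVotes f' ypl := by omega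
    rcases eq_or_lt_of_le this with he | hl
    · exact Or.inr ⟨he.symm, h⟩
    · exact Or.inl hl
  · exact absurd h.symm hne
  · simp only [h, if_true] at hgap
    exact Or.inl (by omega)
end

section
/- Under plurality voting with smallest-index tie-breaking, the certified robustness bound r = ⌊(c(y_pl) − c(y_ru) − [y_ru < y_pl]) / 2⌋ is tight: there exists a modification of exactly r + 1 submodel votes after which the plurality winner is no longer y_pl. -/
/-- **Tightness of the plurality voting bound.**
There exists a modification of exactly `r + 1` submodel votes after which the
plurality winner is no longer `y_pl`. -/
theorem plurality_bound_tight {T : ℕ} (hT : 0 < T) (Y : Finset ℕ) (hY : 2 ≤ Y.card)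
    (f : Fin T → ℕ) (hf : ∀ t, f t ∈ Y) (ypl yru : ℕ)
    (hpl : IsPlurality Y f ypl)
    (hru : IsPlurality (Y.erase ypl) f yru) :
    ∃ f' : Fin T → ℕ, (∀ t, f' t ∈ Y) ∧
      ((Finset.univ.filter fun t => f' t ≠ f t).card : ℤ) = voteGap f ypl yru / 2 + 1 ∧
      ¬ IsPlurality Y f' ypl := by
  obtain ⟨hplY, hprefpl⟩ := hpl
  obtain ⟨hruYe, _⟩ := hru
  rw [Finset.mem_erase] at hruYe
  obtain ⟨hne, hyruY⟩ := hruYe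
  have hpref := hprefpl yru hyruY hne
  set a := countVotes f ypl with ha
  set b := countVotes f yru with hb
  set g : ℤ := voteGap f ypl yru with hgdef
  have hg : g = (a : ℤ) - (b : ℤ) - (if yru < ypl then 1 else 0) := rfl
  have ha1 : 1 ≤ a := by
    obtain ⟨t0⟩ := Fin.pos_iff_nonempty.mp hT
    have hcnt : 1 ≤ countVotes f (f t0) := by
      rw [countVotes]
      exact Finset.card_pos.mpr ⟨t0, by simp⟩
    by_cases h : f t0 = ypl
    · rw [ha]; rw [h] at hcnt; exact hcnt
    · rcases hprefpl (f t0) (hf t0) h with h' | ⟨h', _⟩ <;> omega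
  have hgap0 : 0 ≤ g := by
    rw [hg]
    rcases hpref with h | ⟨h, h2⟩
    · split <;> omega
    · have : ¬ yru < ypl := by omega
      simp [this]; omega
  set n : ℕ := (g / 2 + 1).toNat with hndef
  have hn : (n : ℤ) = g / 2 + 1 := Int.toNat_of_nonneg (by omega)
  have hna : n ≤ a := by
    have hba : g ≤ (a : ℤ) - b := by rw [hg]; split <;> omega
    omega
  set S : Finset (Fin T) := Finset.univ.filter (fun t => f t = ypl) with hSdef
  have hScard : S.card = a := rfl
  obtain ⟨S', hS'sub, hS'card⟩ := Finset.exists_subset_card_eq (s := S) (n := n) (by omega)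
  set f' : Fin T → ℕ := fun t => if t ∈ S' then yru else f t with hf'def
  have hSmem : ∀ t ∈ S', f t = ypl := fun t ht =>
    (Finset.mem_filter.mp (hS'sub ht)).2
  refine ⟨f', fun t => ?_, ?_, ?_⟩
  · by_cases h : t ∈ S' <;> simp [hf'def, h] <;> [exact hyruY; exact hf t]
  · have hdiff : Finset.univ.filter (fun t => f' t ≠ f t) = S' := by
      ext t
      simp only [Finset.mem_filter, Finset.mem_univ, true_and, hf'def]
      by_cases h : t ∈ S'
      · simp [h, hSmem t h]; exact hne
      · simp [h]
    rw [hdiff, hS'card]; exact hn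
  · have hc1 : countVotes f' ypl = a - n := by
      have : Finset.univ.filter (fun t => f' t = ypl) = S \ S' := by
        ext t
        simp only [Finset.mem_filter, Finset.mem_univ, true_and, Finset.mem_sdiff,
          hSdef, hf'def]
        by_cases h : t ∈ S'
        · simp [h]; exact fun e => hne e
        · simp [h]
      rw [countVotes, this, Finset.card_sdiff_of_subset hS'sub, hScard, hS'card]
    have hc2 : countVotes f' yru = b + n := by
      have heq : Finset.univ.filter (fun t => f' t = yru) =
          (Finset.univ.filter (fun t => f t = yru)) ∪ S' := by
        ext t
        simp only [Finset.mem_filter, Finset.mem_univ, true_and, Finset.mem_union,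
          hf'def]
        by_cases h : t ∈ S'
        · simp [h]
        · simp [h]
      have hdisj : Disjoint (Finset.univ.filter (fun t => f t = yru)) S' := by
        rw [Finset.disjoint_left]
        intro t ht ht'
        rw [Finset.mem_filter] at ht
        exact hne ((hSmem t ht').symm.trans ht.2 |>.symm ▸ rfl)
      rw [countVotes, heq, Finset.card_union_of_disjoint hdisj, hS'card]
      rfl
    rintro ⟨-, hp⟩
    have hpf := hp yru hyruY hne
    rw [Preferred, hc1, hc2] at hpf
    by_cases hlt : yru < ypl
    · have hg' : g = (a : ℤ) - b - 1 := by rw [hg]; simp [hlt]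
      rcases hpf with h | ⟨h, h2⟩ <;> omega
    · have hg' : g = (a : ℤ) - b := by rw [hg]; simp [hlt]
      have hpllt : ¬ ypl < yru → False := fun h => hne (by omega)
      rcases hpf with h | ⟨h, h2⟩ <;> omega
end

section
/- Define dp(Δ, Δ') = 0 if min(Δ, Δ') ≤ 1 and (Δ, Δ') ≠ (1,1), else dp(Δ, Δ') = 1 + min(dp(Δ−2, Δ'−1), dp(Δ−1, Δ'−2)). Consider any sequence of k 'perturbation steps', each of which either subtracts (2,1) or subtracts (1,2) from the pair (Δ, Δ'). If k ≤ dp(Δ, Δ'), then after the k steps at least one coordinate of the resulting pair is ≥ 0. -/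
/-- The run-off case-2 dynamic-programming function:
`dp(Δ, Δ') = 0` if `min(Δ, Δ') ≤ 1` and `(Δ, Δ') ≠ (1, 1)`, and
`dp(Δ, Δ') = 1 + min (dp (Δ−2) (Δ'−1)) (dp (Δ−1) (Δ'−2))` otherwise. -/
def dp (a b : ℤ) : ℕ :=
  if h : (a ≤ 1 ∨ b ≤ 1) ∧ ¬(a = 1 ∧ b = 1) then 0
  else 1 + min (dp (a - 2) (b - 1)) (dp (a - 1) (b - 2))
termination_by (a + b + 1).toNat
decreasing_by
  · omega
  · omega

/-- A perturbation step: subtract `(2, 1)` (if `b = true`) or `(1, 2)` (if `b = false`)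
from the pair of gaps. -/
def stepFn (p : ℤ × ℤ) (b : Bool) : ℤ × ℤ :=
  if b then (p.1 - 2, p.2 - 1) else (p.1 - 1, p.2 - 2)

/-- **Soundness of `dp`.** Starting from `(Δ, Δ')` with both coordinates nonnegative,
after any sequence of at most `dp Δ Δ'` perturbation steps, at least one coordinate
of the resulting pair is still `≥ 0`. -/
theorem dp_sound (Δ Δ' : ℤ) (hΔ : 0 ≤ Δ) (hΔ' : 0 ≤ Δ')
    (l : List Bool) (hl : l.length ≤ dp Δ Δ') :
    0 ≤ (l.foldl stepFn (Δ, Δ')).1 ∨ 0 ≤ (l.foldl stepFn (Δ, Δ')).2 := by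
  induction l generalizing Δ Δ' with
  | nil => exact Or.inl hΔ
  | cons b t ih =>
    rw [dp] at hl
    split at hl
    · simp at hl
    · rename_i h
      have h' : (1 < Δ ∧ 1 < Δ') ∨ (Δ = 1 ∧ Δ' = 1) := by
        by_contra hc
        push_neg at hc
        exact h ⟨by omega, fun ⟨h1, h2⟩ => by omega⟩
      rcases h' with ⟨h1, h2⟩ | ⟨h1, h2⟩
      · simp only [List.foldl_cons]
        cases b with
        | true =>
          have : (stepFn (Δ, Δ') true) = (Δ - 2, Δ' - 1) := by simp [stepFn]
          rw [this]
          apply ih _ _ (by omega) (by omega)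
          simp only [List.length_cons] at hl
          omega
        | false =>
          have : (stepFn (Δ, Δ') false) = (Δ - 1, Δ' - 2) := by simp [stepFn]
          rw [this]
          apply ih _ _ (by omega) (by omega)
          simp only [List.length_cons] at hl
          omega
      · subst h1 h2
        have hd1 : dp (-1 : ℤ) 0 = 0 := by rw [dp]; simp
        have hd2 : dp (0 : ℤ) (-1) = 0 := by rw [dp]; simp
        have hd3 : dp ((1:ℤ) - 2) ((1:ℤ) - 1) = 0 := by norm_num [hd1]
        have hd4 : dp ((1:ℤ) - 1) ((1:ℤ) - 2) = 0 := by norm_num [hd2]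
        rw [hd3, hd4] at hl
        simp only [List.length_cons] at hl
        have ht : t = [] := by
          have := List.length_eq_zero_iff.mp (by omega : t.length = 0)
          exact this
        subst ht
        cases b with
        | true => right; simp [stepFn]
        | false => left; simp [stepFn]
end

section
/- Greedy top-k certification is correct: given vote counts c : Y → ℕ summing to T, a target label y initially among the k labels with most votes (ties broken toward smaller indices), the greedy procedure — repeatedly decrement c(y) by 1 if c(y) > 0 (else decrement the current plurality label's count), increment the count of the label currently holding the (k+1)-th most votes, until y leaves the top k — terminates after r + 1 iterations where r equals the maximum number of single-vote changes an adversary can make while y remains guaranteed in the top k. -/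
/-- Transfer one vote from label `a` to label `b`. -/
def transfer (c : ℕ → ℕ) (a b : ℕ) : ℕ → ℕ :=
  fun z => if z = a then c a - 1 else if z = b then c b + 1 else c z

/-- Label `a` beats label `b` (more votes, ties broken toward the smaller index). -/
def Beats (c : ℕ → ℕ) (a b : ℕ) : Prop :=
  c a > c b ∨ (c a = c b ∧ a < b)

instance (c : ℕ → ℕ) (a b : ℕ) : Decidable (Beats c a b) := by
  unfold Beats; infer_instance

/-- Number of labels in `Y` that beat `a`. -/
def rank (Y : Finset ℕ) (c : ℕ → ℕ) (a : ℕ) : ℕ :=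
  (Y.filter fun b => Beats c b a).card

/-- `y` is among the `k` labels with most votes (ties toward smaller indices):
at most `k − 1` labels beat it. -/
def InTopK (Y : Finset ℕ) (k : ℕ) (c : ℕ → ℕ) (y : ℕ) : Prop :=
  rank Y c y < k

/-- `Reach Y c m c'`: the count function `c'` is obtainable from `c` by `m` single-vote
changes (each change decrements one label's positive count and increments another's). -/
inductive Reach (Y : Finset ℕ) (c : ℕ → ℕ) : ℕ → (ℕ → ℕ) → Prop
  | refl : Reach Y c 0 c
  | step {m : ℕ} {c' : ℕ → ℕ} {a b : ℕ} : Reach Y c m c' → a ∈ Y → b ∈ Y → a ≠ b →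
      0 < c' a → Reach Y c (m + 1) (transfer c' a b)

/-- One iteration of the greedy top-`k` procedure for target label `y`:
decrement `c y` if positive, otherwise decrement the plurality label's count;
in either case, increment the count of the label holding the `(k+1)`-th most votes. -/
def GreedyStep (Y : Finset ℕ) (k : ℕ) (y : ℕ) (c c' : ℕ → ℕ) : Prop :=
  ∃ t ∈ Y, rank Y c t = k ∧
    ((0 < c y ∧ y ≠ t ∧ c' = transfer c y t) ∨
     (c y = 0 ∧ ∃ p ∈ Y, rank Y c p = 0 ∧ p ≠ t ∧ c' = transfer c p t))

namespace GC

lemma beats_trans {c : ℕ → ℕ} {a b d : ℕ} (h1 : Beats c a b) (h2 : Beats c b d) :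
    Beats c a d := by unfold Beats at *; omega

lemma beats_total {c : ℕ → ℕ} {a b : ℕ} (h : a ≠ b) : Beats c a b ∨ Beats c b a := by
  unfold Beats
  rcases Nat.lt_trichotomy (c a) (c b) with h' | h' | h'
  · right; left; omega
  · rcases Nat.lt_trichotomy a b with h2 | h2 | h2
    · left; right; omega
    · exact absurd h2 h
    · right; right; omega
  · left; left; omega

lemma beats_irrefl (c : ℕ → ℕ) (a : ℕ) : ¬ Beats c a a := by unfold Beats; omega

lemma ne_of_beats {c : ℕ → ℕ} {a b : ℕ} (h : Beats c a b) : a ≠ b := by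
  rintro rfl; exact beats_irrefl c a h

lemma rank_lt_rank {Y : Finset ℕ} {c : ℕ → ℕ} {a b : ℕ} (ha : a ∈ Y) (hab : Beats c a b) :
    rank Y c a < rank Y c b := by
  apply Finset.card_lt_card
  rw [Finset.ssubset_iff_of_subset]
  · exact ⟨a, Finset.mem_filter.mpr ⟨ha, hab⟩,
      fun h => beats_irrefl c a (Finset.mem_filter.mp h).2⟩
  · intro z hz
    rw [Finset.mem_filter] at *
    exact ⟨hz.1, beats_trans hz.2 hab⟩

lemma rank_inj {Y : Finset ℕ} {c : ℕ → ℕ} {a b : ℕ} (ha : a ∈ Y) (hb : b ∈ Y)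
    (h : rank Y c a = rank Y c b) : a = b := by
  by_contra hab
  rcases beats_total (c := c) hab with h1 | h1
  · exact absurd h (Nat.ne_of_lt (rank_lt_rank ha h1))
  · exact absurd h.symm (Nat.ne_of_lt (rank_lt_rank hb h1))

lemma beats_of_rank_lt {Y : Finset ℕ} {c : ℕ → ℕ} {a b : ℕ} (ha : a ∈ Y) (hb : b ∈ Y)
    (h : rank Y c a < rank Y c b) : Beats c a b := by
  have hab : a ≠ b := by rintro rfl; omega
  rcases beats_total (c := c) hab with h1 | h1
  · exact h1
  · exact absurd (rank_lt_rank hb h1) (by omega)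

/-- votes `b` still needs, to beat `y` when `y`'s count will be `A`. -/
def need (y : ℕ) (c : ℕ → ℕ) (A b : ℕ) : ℕ := (A + if y < b then 1 else 0) - c b

lemma need_le_need {y : ℕ} {c : ℕ → ℕ} {A s b : ℕ} (h : Beats c s b) :
    need y c A s ≤ need y c A b := by
  unfold need Beats at *; split_ifs <;> omega

lemma need_zero_iff {y : ℕ} {c : ℕ → ℕ} {b : ℕ} (hb : b ≠ y) :
    need y c (c y) b = 0 ↔ Beats c b y := by
  unfold need Beats; split_ifs <;> omega

/-- adversary budget `m` suffices to push `y` out of top `k`. -/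
def okm (Y : Finset ℕ) (k y : ℕ) (c : ℕ → ℕ) (m : ℕ) : Prop :=
  ∃ S : Finset ℕ, S ⊆ Y.erase y ∧ S.card = k ∧
    ∃ x, x ≤ c y ∧ x ≤ m ∧ ∑ b ∈ S, need y c (c y - x) b ≤ m

/-- minimum adversary budget. -/
noncomputable def Phi (Y : Finset ℕ) (k y : ℕ) (c : ℕ → ℕ) : ℕ :=
  sInf {m | okm Y k y c m}

lemma okm_mono {Y : Finset ℕ} {k y : ℕ} {c : ℕ → ℕ} {m m' : ℕ} (h : m ≤ m')
    (ho : okm Y k y c m) : okm Y k y c m' := by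
  obtain ⟨S, h1, h2, x, h3, h4, h5⟩ := ho
  exact ⟨S, h1, h2, x, h3, le_trans h4 h, le_trans h5 h⟩

lemma okm_nonempty {Y : Finset ℕ} {k y : ℕ} {c : ℕ → ℕ} (hcard : k ≤ (Y.erase y).card) :
    {m | okm Y k y c m}.Nonempty := by
  obtain ⟨S, hS, hc⟩ := Finset.exists_subset_card_eq hcard
  refine ⟨c y + ∑ b ∈ S, need y c (c y - c y) b, S, hS, hc, c y, le_rfl, by omega, by omega⟩

lemma okm_phi {Y : Finset ℕ} {k y : ℕ} {c : ℕ → ℕ} (hcard : k ≤ (Y.erase y).card) :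
    okm Y k y c (Phi Y k y c) := Nat.sInf_mem (okm_nonempty hcard)

lemma phi_le {Y : Finset ℕ} {k y : ℕ} {c : ℕ → ℕ} {m : ℕ} (h : okm Y k y c m) :
    Phi Y k y c ≤ m := Nat.sInf_le h

lemma phi_zero {Y : Finset ℕ} {k y : ℕ} {c : ℕ → ℕ} (h : k ≤ rank Y c y) :
    Phi Y k y c = 0 := by
  have : Phi Y k y c ≤ 0 := by
    obtain ⟨S, hS, hc⟩ := Finset.exists_subset_card_eq h
    refine phi_le ⟨S, ?_, hc, 0, by omega, le_rfl, ?_⟩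
    · intro z hz
      have := Finset.mem_filter.mp (hS hz)
      exact Finset.mem_erase.mpr ⟨ne_of_beats this.2, this.1⟩
    · have : ∑ b ∈ S, need y c (c y - 0) b = 0 := by
        apply Finset.sum_eq_zero
        intro b hb
        have hbf := Finset.mem_filter.mp (hS hb)
        have : need y c (c y) b = 0 := (need_zero_iff (ne_of_beats hbf.2)).mpr hbf.2
        simpa using this
      omega
  omega

lemma phi_pos {Y : Finset ℕ} {k y : ℕ} {c : ℕ → ℕ} (hcard : k ≤ (Y.erase y).card)
    (htop : rank Y c y < k) : 0 < Phi Y k y c := by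
  rcases Nat.eq_zero_or_pos (Phi Y k y c) with h0 | h; swap
  · exact h
  exfalso
  obtain ⟨S, hS, hSc, x, hx, hxm, hsig⟩ := h0 ▸ okm_phi (c := c) hcard
  have hx0 : x = 0 := by omega
  subst hx0
  have hbeats : ∀ b ∈ S, Beats c b y := by
    intro b hb
    have h0 : need y c (c y) b = 0 := by
      have := Finset.sum_eq_zero_iff.mp (by omega : ∑ b ∈ S, need y c (c y - 0) b = 0) b hb
      simpa using this
    exact (need_zero_iff (Finset.ne_of_mem_erase (hS hb))).mp h0
  have : S ⊆ Y.filter fun b => Beats c b y := by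
    intro b hb
    exact Finset.mem_filter.mpr ⟨Finset.mem_of_mem_erase (hS hb), hbeats b hb⟩
  have := Finset.card_le_card this
  unfold rank at htop
  omega

lemma sum_le_sum_succ {S : Finset ℕ} {f g : ℕ → ℕ} (b : ℕ)
    (h : ∀ z ∈ S, z ≠ b → f z ≤ g z) (hb : f b ≤ g b + 1) :
    ∑ z ∈ S, f z ≤ (∑ z ∈ S, g z) + 1 := by
  by_cases hbS : b ∈ S
  · rw [← Finset.sum_erase_add _ _ hbS, ← Finset.sum_erase_add _ _ hbS]
    have h2 : ∑ z ∈ S.erase b, f z ≤ ∑ z ∈ S.erase b, g z :=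
      Finset.sum_le_sum fun z hz => h z (Finset.mem_of_mem_erase hz) (Finset.ne_of_mem_erase hz)
    omega
  · have h2 : ∑ z ∈ S, f z ≤ ∑ z ∈ S, g z :=
      Finset.sum_le_sum fun z hz => h z hz (by rintro rfl; exact hbS hz)
    omega

lemma succ_sum_le {S : Finset ℕ} {f g : ℕ → ℕ} {t : ℕ} (ht : t ∈ S)
    (h : ∀ z ∈ S, z ≠ t → f z ≤ g z) (htt : f t + 1 ≤ g t) :
    (∑ z ∈ S, f z) + 1 ≤ ∑ z ∈ S, g z := by
  rw [← Finset.sum_erase_add _ _ ht, ← Finset.sum_erase_add _ _ ht]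
  have h2 : ∑ z ∈ S.erase t, f z ≤ ∑ z ∈ S.erase t, g z :=
    Finset.sum_le_sum fun z hz => h z (Finset.mem_of_mem_erase hz) (Finset.ne_of_mem_erase hz)
  omega

lemma phi_transfer1 {Y : Finset ℕ} {k y b : ℕ} {c : ℕ → ℕ}
    (hcard : k ≤ (Y.erase y).card) (hby : b ≠ y) (hpos : 0 < c y) :
    Phi Y k y c ≤ Phi Y k y (transfer c y b) + 1 := by
  set c' := transfer c y b with hc'
  obtain ⟨S, hS, hSc, x', hx', hxm, hs⟩ := okm_phi (c := c') hcard
  have hSy : ∀ z ∈ S, z ≠ y := fun z hz => Finset.ne_of_mem_erase (hS hz)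
  have hc'y : c' y = c y - 1 := by simp [hc', transfer]
  have hA : c y - (x' + 1) = c' y - x' := by omega
  refine phi_le ⟨S, hS, hSc, x' + 1, by omega, by omega, ?_⟩
  have key : ∑ z ∈ S, need y c (c y - (x' + 1)) z
      ≤ (∑ z ∈ S, need y c' (c' y - x') z) + 1 := by
    apply sum_le_sum_succ b
    · intro z hz hzb
      have hzy := hSy z hz
      have hcz : c' z = c z := by simp [hc', transfer, hzy, hzb]
      unfold need
      rw [hA, hcz]
    · have hcb : c' b = c b + 1 := by simp [hc', transfer, hby]
      unfold need
      rw [hA, hcb]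
      split_ifs <;> omega
  omega

lemma phi_transfer2 {Y : Finset ℕ} {k y a : ℕ} {c : ℕ → ℕ}
    (hcard : k ≤ (Y.erase y).card) (hay : a ≠ y) :
    Phi Y k y c ≤ Phi Y k y (transfer c a y) + 1 := by
  set c' := transfer c a y with hc'
  obtain ⟨S, hS, hSc, x', hx', hxm, hs⟩ := okm_phi (c := c') hcard
  have hSy : ∀ z ∈ S, z ≠ y := fun z hz => Finset.ne_of_mem_erase (hS hz)
  have hc'y : c' y = c y + 1 := by simp [hc', transfer, Ne.symm hay]
  refine phi_le ⟨S, hS, hSc, min x' (c y), min_le_right _ _, by omega, ?_⟩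
  have key : ∑ z ∈ S, need y c (c y - min x' (c y)) z
      ≤ ∑ z ∈ S, need y c' (c' y - x') z := by
    apply Finset.sum_le_sum
    intro z hz
    have hzy := hSy z hz
    have hcz : c' z ≤ c z := by
      rcases eq_or_ne z a with rfl | hza
      · simp [hc', transfer]
      · simp [hc', transfer, hza, hzy]
    have hAA : c y - min x' (c y) ≤ c' y - x' := by omega
    unfold need
    split_ifs <;> omega
  omega

lemma phi_transfer3 {Y : Finset ℕ} {k y a b : ℕ} {c : ℕ → ℕ}
    (hcard : k ≤ (Y.erase y).card) (hab : a ≠ b) (hay : a ≠ y) (hby : b ≠ y) :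
    Phi Y k y c ≤ Phi Y k y (transfer c a b) + 1 := by
  set c' := transfer c a b with hc'
  obtain ⟨S, hS, hSc, x', hx', hxm, hs⟩ := okm_phi (c := c') hcard
  have hc'y : c' y = c y := by simp [hc', transfer, Ne.symm hay, Ne.symm hby]
  refine phi_le ⟨S, hS, hSc, x', by omega, by omega, ?_⟩
  have key : ∑ z ∈ S, need y c (c y - x') z
      ≤ (∑ z ∈ S, need y c' (c' y - x') z) + 1 := by
    apply sum_le_sum_succ b
    · intro z hz hzb
      have hcz : c' z ≤ c z := by
        rcases eq_or_ne z a with rfl | hza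
        · simp [hc', transfer]
        · simp [hc', transfer, hza, hzb]
      unfold need
      rw [hc'y]
      split_ifs <;> omega
    · have hcb : c' b = c b + 1 := by simp [hc', transfer, Ne.symm hab]
      unfold need
      rw [hc'y, hcb]
      split_ifs <;> omega
  omega

lemma phi_transfer {Y : Finset ℕ} {k y a b : ℕ} {c : ℕ → ℕ}
    (hcard : k ≤ (Y.erase y).card) (hab : a ≠ b) (hpos : 0 < c a) :
    Phi Y k y c ≤ Phi Y k y (transfer c a b) + 1 := by
  by_cases ha : a = y
  · rw [ha] at hpos ⊢
    exact phi_transfer1 hcard (fun h => hab (ha.trans h.symm)) hpos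
  · by_cases hb : b = y
    · rw [hb]
      exact phi_transfer2 hcard ha
    · exact phi_transfer3 hcard hab ha hb

lemma card_topset {Y : Finset ℕ} {c : ℕ → ℕ} {t k : ℕ} (htY : t ∈ Y)
    (htr : rank Y c t = k) :
    (Y.filter fun b => rank Y c b ≤ k).card = k + 1 := by
  have heq : Y.filter (fun b => rank Y c b ≤ k) = insert t (Y.filter fun b => Beats c b t) := by
    ext b
    simp only [Finset.mem_filter, Finset.mem_insert]
    constructor
    · rintro ⟨hbY, hbr⟩
      rcases eq_or_ne b t with rfl | hbt
      · exact Or.inl rfl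
      · refine Or.inr ⟨hbY, beats_of_rank_lt hbY htY ?_⟩
        have : rank Y c b ≠ k := fun h => hbt (rank_inj hbY htY (h.trans htr.symm))
        omega
    · rintro (rfl | ⟨hbY, hb⟩)
      · exact ⟨htY, le_of_eq htr⟩
      · exact ⟨hbY, by have := rank_lt_rank hbY hb; omega⟩
  have htf : t ∉ Y.filter fun b => Beats c b t := by
    simp only [Finset.mem_filter]
    rintro ⟨-, h⟩
    exact beats_irrefl c t h
  rw [heq, Finset.card_insert_of_notMem htf]
  unfold rank at htr
  omega

lemma exists_swap {Y : Finset ℕ} {c : ℕ → ℕ} {k y t : ℕ} {S0 : Finset ℕ}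
    (hyY : y ∈ Y) (htY : t ∈ Y) (htr : rank Y c t = k) (htop : rank Y c y < k)
    (hS0 : S0 ⊆ Y.erase y) (hc0 : S0.card = k) (A : ℕ) :
    ∃ S, S ⊆ Y.erase y ∧ S.card = k ∧ t ∈ S ∧
      ∑ b ∈ S, need y c A b ≤ ∑ b ∈ S0, need y c A b := by
  by_cases htS : t ∈ S0
  · exact ⟨S0, hS0, hc0, htS, le_rfl⟩
  have hty : t ≠ y := fun h => by rw [h] at htr; omega
  have hex : ∃ b0 ∈ S0, ¬ rank Y c b0 ≤ k := by
    by_contra hall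
    push_neg at hall
    have hsub : S0 ⊆ ((Y.filter fun b => rank Y c b ≤ k).erase y).erase t := by
      intro z hz
      refine Finset.mem_erase.mpr ⟨fun h => htS (h ▸ hz), Finset.mem_erase.mpr
        ⟨Finset.ne_of_mem_erase (hS0 hz), Finset.mem_filter.mpr
          ⟨Finset.mem_of_mem_erase (hS0 hz), hall z hz⟩⟩⟩
    have hcardF := card_topset htY htr
    have hyF : y ∈ Y.filter fun b => rank Y c b ≤ k :=
      Finset.mem_filter.mpr ⟨hyY, by omega⟩
    have htF : t ∈ (Y.filter fun b => rank Y c b ≤ k).erase y :=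
      Finset.mem_erase.mpr ⟨hty, Finset.mem_filter.mpr ⟨htY, le_of_eq htr⟩⟩
    have h1 := Finset.card_erase_of_mem hyF
    have h2 := Finset.card_erase_of_mem htF
    have h3 := Finset.card_le_card hsub
    omega
  obtain ⟨b0, hb0S, hb0r⟩ := hex
  have hb0Y : b0 ∈ Y := Finset.mem_of_mem_erase (hS0 hb0S)
  have hbt : Beats c t b0 := beats_of_rank_lt htY hb0Y (by omega)
  have htne : t ∉ S0.erase b0 := fun h => htS (Finset.mem_of_mem_erase h)
  refine ⟨insert t (S0.erase b0), ?_, ?_, Finset.mem_insert_self _ _, ?_⟩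
  · exact Finset.insert_subset_iff.mpr ⟨Finset.mem_erase.mpr ⟨hty, htY⟩,
      (Finset.erase_subset _ _).trans hS0⟩
  · rw [Finset.card_insert_of_notMem htne, Finset.card_erase_of_mem hb0S]
    omega
  · rw [Finset.sum_insert htne]
    have h1 := Finset.sum_erase_add S0 (need y c A) hb0S
    have h2 := need_le_need (y := y) (A := A) hbt
    omega

lemma plurality_big {Y : Finset ℕ} {c : ℕ → ℕ} {k y p T : ℕ}
    (hpY : p ∈ Y) (hpr : rank Y c p = 0) (hcy0 : c y = 0)
    (htop : rank Y c y < k) (hsum : ∑ a ∈ Y, c a = T) (hkT : k < T) : 2 ≤ c p := by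
  by_contra hcp
  push_neg at hcp
  have hmax : ∀ b ∈ Y, c b ≤ 1 := by
    intro b hb
    rcases eq_or_ne b p with rfl | hbp
    · omega
    · have hne : rank Y c b ≠ 0 := fun h => hbp (rank_inj hb hpY (h.trans hpr.symm))
      have hbeats := beats_of_rank_lt (c := c) hpY hb (by omega)
      unfold Beats at hbeats
      omega
  have hsplit := Finset.sum_filter_add_sum_filter_not Y (fun b => Beats c b y) c
  have hz : ∑ b ∈ Y.filter (fun b => ¬ Beats c b y), c b = 0 := by
    apply Finset.sum_eq_zero
    intro b hb
    have hbf := Finset.mem_filter.mp hb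
    by_contra hcb
    exact hbf.2 (Or.inl (by omega))
  have hb1 : ∑ b ∈ Y.filter (fun b => Beats c b y), c b
      ≤ (Y.filter (fun b => Beats c b y)).card • 1 :=
    Finset.sum_le_card_nsmul _ _ 1 (fun b hb => hmax b (Finset.mem_filter.mp hb).1)
  simp only [smul_eq_mul, mul_one] at hb1
  unfold rank at htop
  omega

lemma phi_greedy {Y : Finset ℕ} {k y T : ℕ} {c c' : ℕ → ℕ}
    (hcard : k ≤ (Y.erase y).card) (hyY : y ∈ Y) (hkT : k < T)
    (hsum : ∑ a ∈ Y, c a = T) (htop : rank Y c y < k)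
    (hstep : GreedyStep Y k y c c') :
    Phi Y k y c' + 1 ≤ Phi Y k y c := by
  obtain ⟨t, htY, htr, hcase⟩ := hstep
  have hty : t ≠ y := fun h => by rw [h] at htr; omega
  have hyt : Beats c y t := beats_of_rank_lt hyY htY (by omega)
  set M := Phi Y k y c with hM
  have hMpos : 0 < M := phi_pos hcard htop
  obtain ⟨S0, hS00, hS0c, x, hx, hxM, hs0⟩ := okm_phi (c := c) hcard
  obtain ⟨S, hS, hSc, htS, hle⟩ := exists_swap hyY htY htr htop hS00 hS0c (c y - x)
  have hs : ∑ b ∈ S, need y c (c y - x) b ≤ M := le_trans hle hs0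
  have hSy : ∀ z ∈ S, z ≠ y := fun z hz => Finset.ne_of_mem_erase (hS hz)
  have hntop : 1 ≤ need y c (c y) t := by
    rcases Nat.eq_zero_or_pos (need y c (c y) t) with h0 | h
    · exfalso
      have hb := (need_zero_iff hty).mp h0
      unfold Beats at hb hyt
      omega
    · exact h
  have main : okm Y k y c' (M - 1) := by
    rcases hcase with ⟨hcy, hyt2, rfl⟩ | ⟨hcy0, p, hpY, hpr, hpt, rfl⟩
    · -- c' = transfer c y t
      have hc'y : (transfer c y t) y = c y - 1 := by simp [transfer]
      have hc't : (transfer c y t) t = c t + 1 := by simp [transfer, hty]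
      rcases Nat.eq_zero_or_pos x with rfl | hxpos
      · -- x = 0
        refine ⟨S, hS, hSc, 0, by omega, by omega, ?_⟩
        have key : (∑ z ∈ S, need y (transfer c y t) ((transfer c y t) y - 0) z) + 1
            ≤ ∑ z ∈ S, need y c (c y - 0) z := by
          apply succ_sum_le htS
          · intro z hz hzt
            have hcz : (transfer c y t) z = c z := by simp [transfer, hSy z hz, hzt]
            unfold need
            rw [hcz, hc'y]
            split_ifs <;> omega
          · unfold need at hntop ⊢
            rw [hc't, hc'y]
            split_ifs at hntop ⊢ <;> omega
        omega
      · -- 1 ≤ x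
        rcases Nat.eq_zero_or_pos (need y c (c y - x) t) with hnt0 | hnt
        · -- t already beats at level c y - x : use the top set
          have hyF : y ∈ Y.filter fun b => rank Y c b ≤ k :=
            Finset.mem_filter.mpr ⟨hyY, by omega⟩
          refine ⟨(Y.filter fun b => rank Y c b ≤ k).erase y,
            Finset.erase_subset_erase y (Finset.filter_subset _ _), ?_, x - 1, by omega,
            by omega, ?_⟩
          · rw [Finset.card_erase_of_mem hyF, card_topset htY htr]
            omega
          have hzero : ∑ b ∈ (Y.filter fun b => rank Y c b ≤ k).erase y,
              need y (transfer c y t) ((transfer c y t) y - (x - 1)) b = 0 := by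
            apply Finset.sum_eq_zero
            intro b hb
            have hby : b ≠ y := Finset.ne_of_mem_erase hb
            have hbf := Finset.mem_filter.mp (Finset.mem_of_mem_erase hb)
            have hnb : need y c (c y - x) b = 0 := by
              rcases eq_or_ne b t with rfl | hbt
              · exact hnt0
              · have hrb : rank Y c b ≠ k := fun h => hbt (rank_inj hbf.1 htY (h.trans htr.symm))
                have hbb := beats_of_rank_lt (c := c) hbf.1 htY (by omega)
                have := need_le_need (y := y) (A := c y - x) hbb
                omega
            have hcb : c b ≤ (transfer c y t) b := by
              rcases eq_or_ne b t with rfl | hbt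
              · rw [hc't]; omega
              · simp [transfer, hby, hbt]
            unfold need at hnb ⊢
            have hA : (transfer c y t) y - (x - 1) = c y - x := by omega
            rw [hA]
            split_ifs at hnb ⊢ <;> omega
          rw [hzero]
          omega
        · refine ⟨S, hS, hSc, x - 1, by omega, by omega, ?_⟩
          have key : (∑ z ∈ S, need y (transfer c y t) ((transfer c y t) y - (x - 1)) z) + 1
              ≤ ∑ z ∈ S, need y c (c y - x) z := by
            apply succ_sum_le htS
            · intro z hz hzt
              have hcz : (transfer c y t) z = c z := by simp [transfer, hSy z hz, hzt]
              have hA : (transfer c y t) y - (x - 1) = c y - x := by omega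
              unfold need
              rw [hcz, hA]
            · have hA : (transfer c y t) y - (x - 1) = c y - x := by omega
              unfold need at hnt ⊢
              rw [hc't, hA]
              split_ifs at hnt ⊢ <;> omega
          omega
    · -- c' = transfer c p t, with c y = 0
      have hp2 : 2 ≤ c p := plurality_big hpY hpr hcy0 htop hsum hkT
      have hpy : p ≠ y := fun h => by rw [h] at hp2; omega
      have hc'y : (transfer c p t) y = c y := by simp [transfer, Ne.symm hpy, Ne.symm hty]
      have hc't : (transfer c p t) t = c t + 1 := by simp [transfer, Ne.symm hpt]
      refine ⟨S, hS, hSc, 0, by omega, by omega, ?_⟩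
      have key : (∑ z ∈ S, need y (transfer c p t) ((transfer c p t) y - 0) z) + 1
          ≤ ∑ z ∈ S, need y c (c y - x) z := by
        apply succ_sum_le htS
        · intro z hz hzt
          have hA : (transfer c p t) y - 0 = c y - x := by omega
          rcases eq_or_ne z p with hzp | hzp
          · subst hzp
            have hcp' : (transfer c z t) z = c z - 1 := by simp [transfer]
            unfold need
            rw [hcp', hA]
            split_ifs <;> omega
          · have hcz : (transfer c p t) z = c z := by simp [transfer, hzp, hzt]
            unfold need
            rw [hcz, hA]
        · have hA : (transfer c p t) y - 0 = c y - x := by omega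
          unfold need at hntop ⊢
          rw [hc't, hA]
          split_ifs at hntop ⊢ <;> omega
      omega
  have := phi_le main
  omega

lemma sum_transfer {Y : Finset ℕ} {c : ℕ → ℕ} {a b : ℕ} (haY : a ∈ Y) (hbY : b ∈ Y)
    (hab : a ≠ b) (hpos : 0 < c a) :
    ∑ z ∈ Y, transfer c a b z = ∑ z ∈ Y, c z := by
  have hamem : a ∈ Y.erase b := Finset.mem_erase.mpr ⟨hab, haY⟩
  rw [← Finset.sum_erase_add _ _ hbY, ← Finset.sum_erase_add _ _ hbY,
      ← Finset.sum_erase_add _ _ hamem, ← Finset.sum_erase_add _ _ hamem]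
  have h1 : ∑ z ∈ (Y.erase b).erase a, transfer c a b z = ∑ z ∈ (Y.erase b).erase a, c z := by
    apply Finset.sum_congr rfl
    intro z hz
    have hza : z ≠ a := Finset.ne_of_mem_erase hz
    have hzb : z ≠ b := Finset.ne_of_mem_erase (Finset.mem_of_mem_erase hz)
    simp [transfer, hza, hzb]
  have h2 : transfer c a b a = c a - 1 := by simp [transfer]
  have h3 : transfer c a b b = c b + 1 := by simp [transfer, Ne.symm hab]
  omega

end GC

/-- **Correctness of greedy top-`k` certification.** If the greedy procedure, started at
`c` with `y` in the top `k`, first pushes `y` out of the top `k` after `N` iterations,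
then `N = r + 1` where `r` is the maximum adversarial budget: every sequence of fewer
than `N` single-vote changes keeps `y` in the top `k`, and some sequence of `N`
single-vote changes pushes `y` out. -/
theorem greedy_topk_optimal (Y : Finset ℕ) (T k : ℕ) (hk : 1 ≤ k) (hkT : k < T)
    (c : ℕ → ℕ) (hsum : ∑ a ∈ Y, c a = T) (hsupp : ∀ a, a ∉ Y → c a = 0)
    (y : ℕ) (hy : y ∈ Y) (hyTop : InTopK Y k c y)
    (g : ℕ → (ℕ → ℕ)) (hg0 : g 0 = c) (N : ℕ)
    (hgreedy : ∀ i < N, GreedyStep Y k y (g i) (g (i + 1)))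
    (hbefore : ∀ i < N, InTopK Y k (g i) y)
    (hend : ¬ InTopK Y k (g N) y) :
    (∀ m < N, ∀ c', Reach Y c m c' → InTopK Y k c' y) ∧
    (∃ c', Reach Y c N c' ∧ ¬ InTopK Y k c' y) := by
  classical
  have hcard : k ≤ (Y.erase y).card := by
    have hk2 : k ≤ rank Y (g N) y := by unfold InTopK at hend; omega
    have hsub : Y.filter (fun b => Beats (g N) b y) ⊆ Y.erase y := by
      intro b hb
      have hbf := Finset.mem_filter.mp hb
      exact Finset.mem_erase.mpr ⟨GC.ne_of_beats hbf.2, hbf.1⟩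
    have := Finset.card_le_card hsub
    unfold rank at hk2
    omega
  have hinv : ∀ i, i ≤ N → Reach Y c i (g i) ∧ ∑ z ∈ Y, g i z = T := by
    intro i
    induction i with
    | zero => intro _; rw [hg0]; exact ⟨Reach.refl, hsum⟩
    | succ n ih =>
      intro hn
      have hn' : n < N := by omega
      obtain ⟨hr, hsumn⟩ := ih (by omega)
      obtain ⟨t, htY, htr, hcase⟩ := hgreedy n hn'
      rcases hcase with ⟨hcy, hyt, hEq⟩ | ⟨hcy0, p, hpY, hpr, hpt, hEq⟩
      · refine ⟨?_, ?_⟩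
        · rw [hEq]; exact Reach.step hr hy htY hyt hcy
        · rw [hEq, GC.sum_transfer hy htY hyt hcy, hsumn]
      · have htop := hbefore n hn'
        unfold InTopK at htop
        have hp2 : 2 ≤ g n p := GC.plurality_big hpY hpr hcy0 htop hsumn hkT
        refine ⟨?_, ?_⟩
        · rw [hEq]; exact Reach.step hr hpY htY hpt (by omega)
        · rw [hEq, GC.sum_transfer hpY htY hpt (by omega), hsumn]
  have hchain : ∀ j, j ≤ N → j ≤ GC.Phi Y k y (g (N - j)) := by
    intro j
    induction j with
    | zero => intro _; omega
    | succ n ih =>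
      intro hn
      have hiN : N - (n + 1) < N := by omega
      have hstep := hgreedy (N - (n + 1)) hiN
      have htop := hbefore (N - (n + 1)) hiN
      unfold InTopK at htop
      have hkey := GC.phi_greedy hcard hy hkT (hinv (N - (n + 1)) (by omega)).2 htop hstep
      have hsucc : N - (n + 1) + 1 = N - n := by omega
      rw [hsucc] at hkey
      have := ih (by omega)
      omega
  have hPhiN : N ≤ GC.Phi Y k y c := by
    have := hchain N le_rfl
    simpa [hg0] using this
  have hreachphi : ∀ m c', Reach Y c m c' → GC.Phi Y k y c ≤ GC.Phi Y k y c' + m := by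
    intro m c' hr
    induction hr with
    | refl => omega
    | step hr' haY hbY hab hpos ih =>
      have := GC.phi_transfer (k := k) hcard hab hpos
      omega
  constructor
  · intro m hm c'' hr
    by_contra hnot
    unfold InTopK at hnot
    have h0 : GC.Phi Y k y c'' = 0 := GC.phi_zero (by omega)
    have := hreachphi m c'' hr
    omega
  · exact ⟨g N, (hinv N le_rfl).1, hend⟩
end

section
/- End-to-end plurality FPA guarantee: with feature set {1,…,d} partitioned into S₁,…,S_T and deterministic submodels f_t depending only on features S_t, let y_pl and y_ru be the plurality and runner-up labels of the ensemble votes on (X, x), and r = ⌊(c(y_pl) − c(y_ru) − [y_ru < y_pl]) / 2⌋. For any (X', x') with |{j : column j differs} ∪ {j : x_j ≠ x'_j}| ≤ r, the plurality label of the ensemble on (X', x') equals y_pl. -/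
open scoped Classical

/-- Vote count changes by at most the number of submodels whose vote changed. -/
lemma countVotes_pert {T : ℕ} (f f' : Fin T → ℕ) (y : ℕ) :
    countVotes f y ≤ countVotes f' y + (Finset.univ.filter fun t => f t ≠ f' t).card := by
  unfold countVotes
  refine le_trans (Finset.card_le_card (t := (Finset.univ.filter fun t => f' t = y) ∪
      (Finset.univ.filter fun t => f t ≠ f' t)) ?_) (Finset.card_union_le _ _)
  intro t ht
  simp only [Finset.mem_filter, Finset.mem_univ, true_and, Finset.mem_union] at *
  by_cases h : f' t = y
  · exact Or.inl h
  · exact Or.inr (fun he => h (he ▸ ht))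

/-- **End-to-end plurality FPA guarantee.** With features partitioned into `S t` and
deterministic submodels depending only on their own feature sets, if training matrix
`X'` and test vector `x'` differ from `(X, x)` on at most
`r = ⌊(c(y_pl) − c(y_ru) − [y_ru < y_pl]) / 2⌋` feature indices, then the ensemble's
plurality label on `(X', x')` is still `y_pl`. -/
theorem fpa_plurality_guarantee (n d T : ℕ) (Y : Finset ℕ)
    (S : Fin T → Finset (Fin d))
    (hdisj : ∀ s t : Fin T, s ≠ t → Disjoint (S s) (S t))
    (hcover : ∀ j : Fin d, ∃ t, j ∈ S t)
    (pred : Fin T → (Fin n → Fin d → ℝ) → (Fin d → ℝ) → ℕ)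
    (hrange : ∀ t X x, pred t X x ∈ Y)
    (hlocal : ∀ t X X' x x',
      (∀ j ∈ S t, (∀ i : Fin n, X i j = X' i j) ∧ x j = x' j) →
      pred t X x = pred t X' x')
    (X : Fin n → Fin d → ℝ) (x : Fin d → ℝ) (ypl yru : ℕ)
    (hpl : IsPlurality Y (fun t => pred t X x) ypl)
    (hru : IsPlurality (Y.erase ypl) (fun t => pred t X x) yru)
    (X' : Fin n → Fin d → ℝ) (x' : Fin d → ℝ)
    (hdiff : ((Finset.univ.filter fun j : Fin d =>
        (∃ i : Fin n, X i j ≠ X' i j) ∨ x j ≠ x' j).card : ℤ) ≤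
      voteGap (fun t => pred t X x) ypl yru / 2) :
    IsPlurality Y (fun t => pred t X' x') ypl := by
  classical
  set f : Fin T → ℕ := fun t => pred t X x with hf
  set f' : Fin T → ℕ := fun t => pred t X' x' with hf'
  set D : Finset (Fin d) := Finset.univ.filter fun j : Fin d =>
      (∃ i : Fin n, X i j ≠ X' i j) ∨ x j ≠ x' j with hDdef
  set B : Finset (Fin T) := Finset.univ.filter fun t : Fin T => f t ≠ f' t with hBdef
  -- each changed submodel has a changed feature in its own set
  have hchange : ∀ t : Fin T, f t ≠ f' t →
      ∃ j ∈ S t, ((∃ i : Fin n, X i j ≠ X' i j) ∨ x j ≠ x' j) := by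
    intro t ht
    by_contra hc
    push_neg at hc
    apply ht
    apply hlocal
    intro j hj
    have h := hc j hj
    exact ⟨h.1, h.2⟩
  -- |B| ≤ |D|
  have hBD : B.card ≤ D.card := by
    have hsel : ∀ t : {t // t ∈ B}, ∃ j, j ∈ S t.1 ∧
        ((∃ i : Fin n, X i j ≠ X' i j) ∨ x j ≠ x' j) := by
      intro t
      have ht : f t.1 ≠ f' t.1 := (Finset.mem_filter.mp t.2).2
      obtain ⟨j, hj, hp⟩ := hchange t.1 ht
      exact ⟨j, hj, hp⟩
    choose g hg1 hg2 using hsel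
    have hmap : ∀ a ∈ B.attach, g a ∈ D := by
      intro a _
      simp only [hDdef, Finset.mem_filter, Finset.mem_univ, true_and]
      exact hg2 a
    have hinj : Set.InjOn g B.attach := by
      intro a _ b _ hab
      by_contra hne
      have hne' : a.1 ≠ b.1 := fun h => hne (Subtype.ext h)
      exact (Finset.disjoint_left.mp (hdisj a.1 b.1 hne')) (hg1 a) (hab ▸ hg1 b)
    calc B.card = B.attach.card := (Finset.card_attach).symm
      _ ≤ D.card := Finset.card_le_card_of_injOn g hmap hinj
  -- arithmetic setup
  have h2m : (D.card : ℤ) * 2 ≤ voteGap f ypl yru := by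
    rw [← Int.le_ediv_iff_mul_le (by norm_num : (0:ℤ) < 2)]
    exact hdiff
  have hBint : (B.card : ℤ) ≤ (D.card : ℤ) := by exact_mod_cast hBD
  have hc1 : countVotes f ypl ≤ countVotes f' ypl + B.card := countVotes_pert f f' ypl
  have hru_mem : yru ∈ Y.erase ypl := hru.1
  have hru_ne : yru ≠ ypl := (Finset.mem_erase.mp hru_mem).1
  refine ⟨hpl.1, ?_⟩
  intro y' hy' hne
  have hc2 : countVotes f' y' ≤ countVotes f y' + B.card := by
    have := countVotes_pert f' f y'
    have hBB : (Finset.univ.filter fun t => f' t ≠ f t) = B := by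
      simp only [hBdef]
      apply Finset.filter_congr
      intro t _
      simp [ne_comm]
    rw [hBB] at this
    exact this
  unfold voteGap at h2m
  show Preferred f' ypl y'
  unfold Preferred
  by_cases hyr : y' = yru
  · subst hyr
    by_cases hlt : y' < ypl
    · rw [if_pos hlt] at h2m
      omega
    · rw [if_neg hlt] at h2m
      have : ypl < y' := by omega
      omega
  · have hpref : Preferred f yru y' := hru.2 y' (Finset.mem_erase.mpr ⟨hne, hy'⟩) hyr
    unfold Preferred at hpref
    by_cases hlt : yru < ypl
    · rw [if_pos hlt] at h2m
      omega
    · rw [if_neg hlt] at h2m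
      have hplru : ypl < yru := by omega
      omega
end

section
/- Run-off case-1 guarantee: let y_r be the run-off winner, ỹ the other top-two round-1 label, and for a label y ≠ y_r define r₁(y) = max( ⌊Δ_vote(ỹ, y)/2⌋, ⌊Δ_logit(y_r, y)/2⌋ ), where Δ_vote and Δ_logit are the tie-broken submodel vote gap and pairwise logit vote gap. If at most r₁(y) submodel outputs are perturbed (each perturbation arbitrarily changing one submodel's vote and its pairwise logit comparisons), then y cannot both (a) displace ỹ from the round-1 top two and (b) beat y_r in the pairwise round-2 comparison. -/
open scoped Classical

/-- `n(u, w)`: number of submodels whose logit for `u` exceeds their logit for `w`. -/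
def logitCount {T : ℕ} (cmp : Fin T → ℕ → ℕ → Bool) (u w : ℕ) : ℕ :=
  (Finset.univ.filter fun t => cmp t u w = true).card

/-- Tie-broken pairwise logit vote gap
`Δ_logit(u, w) = n(u, w) − n(w, u) − [w < u]`. -/
def logitGap {T : ℕ} (cmp : Fin T → ℕ → ℕ → Bool) (u w : ℕ) : ℤ :=
  (logitCount cmp u w : ℤ) - (logitCount cmp w u : ℤ) - (if w < u then 1 else 0)

lemma filter_card_le_aux {T : ℕ} (p q r : Fin T → Prop)
    [DecidablePred p] [DecidablePred q] [DecidablePred r]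
    (h : ∀ t, p t → ¬ q t → r t) :
    (Finset.univ.filter p).card ≤ (Finset.univ.filter q).card + (Finset.univ.filter r).card := by
  calc (Finset.univ.filter p).card
      ≤ ((Finset.univ.filter q) ∪ (Finset.univ.filter r)).card := by
        apply Finset.card_le_card
        intro t ht
        simp only [Finset.mem_filter, Finset.mem_union, Finset.mem_univ, true_and] at *
        by_cases hq : q t
        · exact Or.inl hq
        · exact Or.inr (h t ht hq)
    _ ≤ _ := Finset.card_union_le _ _

/-- **Run-off case-1 guarantee.** Let `y_r` be the run-off winner and `ỹ` the other
top-two round-1 label. For a label `y ≠ y_r`, if at most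
`r₁(y) = max(⌊Δ_vote(ỹ, y)/2⌋, ⌊Δ_logit(y_r, y)/2⌋)` submodel outputs (vote and
pairwise logit comparisons) are perturbed, then `y` cannot both displace `ỹ` from
the round-1 top two and beat `y_r` in the pairwise round-2 comparison. -/
theorem runoff_case1_guarantee {T : ℕ} (Y : Finset ℕ)
    (v : Fin T → ℕ) (cmp : Fin T → ℕ → ℕ → Bool)
    (hv : ∀ t, v t ∈ Y)
    (yr ytil y : ℕ) (hyr : yr ∈ Y) (hytil : ytil ∈ Y) (hy : y ∈ Y)
    (hne : yr ≠ ytil) (hyyr : y ≠ yr)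
    (htop2 : ∀ z ∈ Y, z ≠ yr → z ≠ ytil → Preferred v yr z ∧ Preferred v ytil z)
    (hround2 : 0 ≤ logitGap cmp yr ytil)
    (v' : Fin T → ℕ) (cmp' : Fin T → ℕ → ℕ → Bool)
    (hv' : ∀ t, v' t ∈ Y)
    (hdiff : ((Finset.univ.filter fun t => v' t ≠ v t ∨ cmp' t ≠ cmp t).card : ℤ) ≤
      max (voteGap v ytil y / 2) (logitGap cmp yr y / 2)) :
    ¬ (Preferred v' y ytil ∧ 0 ≤ logitGap cmp' y yr) := by
  rintro ⟨hpref, hlog⟩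
  set k := (Finset.univ.filter fun t : Fin T => v' t ≠ v t ∨ cmp' t ≠ cmp t).card with hk
  -- count perturbation bounds
  have h1 : countVotes v ytil ≤ countVotes v' ytil + k := by
    first | unfold countVotes | unfold logitCount
    rw [hk]
    apply filter_card_le_aux
    intro t hp hq
    exact Or.inl (fun he => hq (he ▸ hp))
  have h2 : countVotes v' y ≤ countVotes v y + k := by
    first | unfold countVotes | unfold logitCount
    rw [hk]
    apply filter_card_le_aux
    intro t hp hq
    exact Or.inl (fun he => hq (he ▸ hp))
  have h3 : logitCount cmp yr y ≤ logitCount cmp' yr y + k := by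
    first | unfold countVotes | unfold logitCount
    rw [hk]
    apply filter_card_le_aux
    intro t hp hq
    exact Or.inr (fun he => hq (by rw [he]; exact hp))
  have h4 : logitCount cmp' y yr ≤ logitCount cmp y yr + k := by
    first | unfold countVotes | unfold logitCount
    rw [hk]
    apply filter_card_le_aux
    intro t hp hq
    exact Or.inr (fun he => hq (by rw [← he]; exact hp))
  by_cases hyt : y = ytil
  · subst hyt
    rcases hpref with h | ⟨_, h⟩ <;> exact absurd h (by omega)
  · -- perturbed gaps are ≤ -1
    have hg1 : voteGap v' ytil y ≤ -1 := by
      unfold voteGap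
      rcases hpref with h | ⟨heq, hlt⟩ <;> split <;> omega
    have hg2 : logitGap cmp' yr y ≤ -1 := by
      unfold logitGap at hlog ⊢
      have : y < yr ∨ yr < y := by omega
      rcases this with h | h <;> simp [h, Nat.lt_asymm h] at hlog ⊢ <;> omega
    rcases le_max_iff.mp hdiff with hd | hd
    · unfold voteGap at hd hg1
      omega
    · unfold logitGap at hd hg2
      omega
end

section
/- Overlapping feature sets vote bound: partition features into φT disjoint subsets, and assign each subset to exactly φ of the φT submodels via a map h. If one feature subset S_l is adversarially perturbed, then at most φ submodel votes change; more generally perturbing features lying in the union of the subsets indexed by a set L ⊆ {1,…,φT} changes at most Σ_{l∈L} φ = φ|L| submodel votes, but never more than the number of submodels t with t ∈ h(l) for some l ∈ L. -/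
open scoped Classical

/-- **Overlapping feature sets vote bound.** Partition the features into `φT` disjoint
subsets `S l`; each subset is assigned to exactly `φ` of the `φT` submodels via `h`,
and each submodel depends only on the coordinates of the subsets assigned to it.
If the perturbed features all lie in the union of the subsets indexed by `L`, then the
number of submodels whose vote changes is at most the number of submodels `t` with
`t ∈ h l` for some `l ∈ L`, which is itself at most `φ·|L|`. -/
theorem overlapping_feature_vote_bound (n d φ T : ℕ) (hφ : 0 < φ) (hT : 0 < T)
    (hd : φ * T ≤ d)
    (S : Fin (φ * T) → Finset (Fin d))
    (hdisj : ∀ l l' : Fin (φ * T), l ≠ l' → Disjoint (S l) (S l'))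
    (hcover : ∀ j : Fin d, ∃ l, j ∈ S l)
    (h : Fin (φ * T) → Finset (Fin (φ * T)))
    (hh : ∀ l, (h l).card = φ)
    (pred : Fin (φ * T) → (Fin n → Fin d → ℝ) → (Fin d → ℝ) → ℕ)
    (hlocal : ∀ t X X' x x',
      (∀ l, t ∈ h l → ∀ j ∈ S l, (∀ i : Fin n, X i j = X' i j) ∧ x j = x' j) →
      pred t X x = pred t X' x')
    (L : Finset (Fin (φ * T)))
    (X X' : Fin n → Fin d → ℝ) (x x' : Fin d → ℝ)
    (hpert : ∀ j : Fin d, ((∃ i : Fin n, X i j ≠ X' i j) ∨ x j ≠ x' j) →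
      ∃ l ∈ L, j ∈ S l) :
    (Finset.univ.filter fun t => pred t X x ≠ pred t X' x').card ≤
        (Finset.univ.filter fun t => ∃ l ∈ L, t ∈ h l).card ∧
    (Finset.univ.filter fun t => ∃ l ∈ L, t ∈ h l).card ≤ φ * L.card := by
  constructor
  · apply Finset.card_le_card
    intro t ht
    simp only [Finset.mem_filter, Finset.mem_univ, true_and] at ht ⊢
    by_contra hc
    push_neg at hc
    apply ht
    apply hlocal
    intro l hl j hj
    constructor
    · intro i
      by_contra hne
      obtain ⟨l', hl', hjl'⟩ := hpert j (Or.inl ⟨i, hne⟩)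
      rcases eq_or_ne l l' with rfl | hll
      · exact hc l hl' hl
      · exact Finset.disjoint_left.mp (hdisj l l' hll) hj hjl'
    · by_contra hne
      obtain ⟨l', hl', hjl'⟩ := hpert j (Or.inr hne)
      rcases eq_or_ne l l' with rfl | hll
      · exact hc l hl' hl
      · exact Finset.disjoint_left.mp (hdisj l l' hll) hj hjl'
  · have hsub : (Finset.univ.filter fun t => ∃ l ∈ L, t ∈ h l) ⊆ L.biUnion h := by
      intro t ht
      simp only [Finset.mem_filter, Finset.mem_univ, true_and] at ht
      obtain ⟨l, hl, htl⟩ := ht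
      exact Finset.mem_biUnion.2 ⟨l, hl, htl⟩
    calc (Finset.univ.filter fun t => ∃ l ∈ L, t ∈ h l).card
        ≤ (L.biUnion h).card := Finset.card_le_card hsub
      _ ≤ ∑ l ∈ L, (h l).card := Finset.card_biUnion_le
      _ = ∑ l ∈ L, φ := by simp [hh]
      _ = φ * L.card := by rw [Finset.sum_const, smul_eq_mul, mul_comm]
end

section
/- Run-off never certifies less than a one-round pairwise comparison in the two-label case: when |Y| = 2, the run-off certified robustness r_run = min(r₁, r₂) from the run-off analysis equals the plurality certified robustness ⌊Δ_vote(y_pl, y_ru)/2⌋, i.e., run-off and plurality voting coincide for binary classification. -/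
lemma dp_ge (a b : ℤ) : min a b / 2 ≤ (dp a b : ℤ) := by
  rw [dp]
  split
  · next h => simp only [Nat.cast_zero]; omega
  · next h =>
    have h1 := dp_ge (a - 2) (b - 1)
    have h2 := dp_ge (a - 1) (b - 2)
    push_cast
    omega
termination_by (a + b + 1).toNat
decreasing_by
  · omega
  · omega

/-- **Run-off coincides with plurality in the binary case.** With label set `{0, 1}`,
run-off winner `y_r = y_pl` (since `Δ_logit = Δ_vote` for two labels), the case-1 bound
is `r₁ = max(⌊Δ_vote(y_ru, y_ru)/2⌋, ⌊Δ_logit(y_pl, y_ru)/2⌋)` and the case-2 bound is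
`r₂ = dp(Δ_vote(y_pl, y_ru), Δ_vote(y_pl, y_ru))`; the run-off certified robustness
`min(r₁, r₂)` equals the plurality certified robustness `⌊Δ_vote(y_pl, y_ru)/2⌋`. -/
theorem runoff_eq_plurality_binary {T : ℕ} (v : Fin T → ℕ) (hv : ∀ t, v t ≤ 1)
    (ypl yru : ℕ) (hpl : ypl ≤ 1) (hru : yru ≤ 1) (hne : ypl ≠ yru)
    (hwin : Preferred v ypl yru) :
    min (max (voteGap v yru yru / 2) (voteGap v ypl yru / 2))
        ((dp (voteGap v ypl yru) (voteGap v ypl yru) : ℤ)) =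
      voteGap v ypl yru / 2 := by
  have h0 : voteGap v yru yru = 0 := by simp [voteGap]
  have hg : 0 ≤ voteGap v ypl yru := by
    rcases hwin with h | ⟨h1, h2⟩ <;> simp only [voteGap] <;> split <;> omega
  have hd := dp_ge (voteGap v ypl yru) (voteGap v ypl yru)
  rw [h0]
  simp only [min_self] at hd
  omega
end
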